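/- Let q ≥ 4 be a prime power and let ξ_i, ξ_j be two distinct elements of 𝔽_q \ {0,1} satisfying ξ_i + ξ_j + 1 = 0. Let C = {x ∈ 𝔽_q^4 : x_1+x_2+x_3+x_4 = 0 and x_2 + ξ_i·x_3 + ξ_j·x_4 = 0}. Then C is a linear antipodal [4,2,3]_q code which is completely regular with covering radius ρ = 2 and intersection array (4(q−1), 3(q−3); 1, 12); the same holds for its dual C⊥, which is the code spanned by the vectors (1,1,1,1) and (0,1,ξ_i,ξ_j). Furthermore, if q = 2^r ≥ 4, then C = C⊥, i.e., C is self-dual. -/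

import Mathlib

open Finset

variable {F : Type*} [Field F] [Fintype F] [DecidableEq F]

/-- The Hamming distance from a vector to a code. -/
noncomputable def distToCode {ι : Type*} [Fintype ι] (C : Set (ι → F)) (x : ι → F) : ℕ :=
  sInf {d : ℕ | ∃ c ∈ C, hammingDist x c = d}

/-- The covering radius of a code: the maximal distance of a vector to the code. -/
noncomputable def coveringRadius {ι : Type*} [Fintype ι] (C : Set (ι → F)) : ℕ :=
  sSup {d : ℕ | ∃ x : ι → F, distToCode C x = d}

/-- `C` has intersection numbers `b l` (number of neighbours one step further from the code)
and `c l` (number of neighbours one step closer to the code), for every `x` at distance `l`. -/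
def HasIntersectionNumbers {ι : Type*} [Fintype ι] (C : Set (ι → F)) (b c : ℕ → ℕ) : Prop :=
  ∀ l : ℕ, ∀ x : ι → F, distToCode C x = l →
    Nat.card {y : ι → F | hammingDist x y = 1 ∧ distToCode C y = l + 1} = b l ∧
    Nat.card {y : ι → F | hammingDist x y = 1 ∧ distToCode C y + 1 = l} = c l

/-- A code is completely regular if it admits intersection numbers. -/
def IsCompletelyRegular {ι : Type*} [Fintype ι] (C : Set (ι → F)) : Prop :=
  ∃ b c : ℕ → ℕ, HasIntersectionNumbers C b c

/-- The minimum distance of a code. -/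
noncomputable def minDist {ι : Type*} [Fintype ι] (C : Set (ι → F)) : ℕ :=
  sInf {d : ℕ | ∃ x ∈ C, ∃ y ∈ C, x ≠ y ∧ hammingDist x y = d}

/-- A code is equidistant if any two distinct codewords are at the same Hamming distance. -/
def IsEquidistant {ι : Type*} [Fintype ι] (C : Set (ι → F)) : Prop :=
  ∃ d : ℕ, ∀ x ∈ C, ∀ y ∈ C, x ≠ y → hammingDist x y = d

/-- The dual of a code, with respect to the standard bilinear form. -/
def dualSet {ι : Type*} [Fintype ι] (C : Set (ι → F)) : Set (ι → F) :=
  {y | ∀ x ∈ C, ∑ i, x i * y i = 0}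

/-- A code of length `n` is antipodal if it contains a word of Hamming weight `n`. -/
def IsAntipodal {ι : Type*} [Fintype ι] (C : Set (ι → F)) : Prop :=
  ∃ v ∈ C, hammingNorm v = Fintype.card ι

/-- A monomial transformation: a coordinate permutation composed with multiplication of
each coordinate by a nonzero scalar. -/
def IsMonomialMap {ι : Type*} (φ : (ι → F) → (ι → F)) : Prop :=
  ∃ (π : Equiv.Perm ι) (s : ι → Fˣ), ∀ x i, φ x i = (s i : F) * x (π i)

/-- Two codes are monomially equivalent if one is the image of the other under a bijection of
coordinates together with multiplication of each coordinate by a nonzero scalar. -/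
def MonomiallyEquivalent {ι κ : Type*} (C : Set (ι → F)) (D : Set (κ → F)) : Prop :=
  ∃ (e : ι ≃ κ) (s : ι → Fˣ),
    (fun (x : ι → F) (j : κ) => (s (e.symm j) : F) * x (e.symm j)) '' C = D

/-- The orbit, under the action of `Aut C` on the cosets of `C`, of the coset of `v`
(realised as the union of all cosets in the orbit). -/
def cosetOrbit {ι : Type*} (C : Submodule F (ι → F)) (v : ι → F) : Set (ι → F) :=
  {w | ∃ φ : (ι → F) → (ι → F), IsMonomialMap φ ∧
    φ '' (C : Set (ι → F)) = (C : Set (ι → F)) ∧ φ v - w ∈ C}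

/-- The number of orbits of the action of `Aut C` on the cosets of `C`. -/
noncomputable def numCosetOrbits {ι : Type*} (C : Submodule F (ι → F)) : ℕ :=
  Nat.card (Set.range (cosetOrbit C))

/-- `H` is a `q`-ary Hamming code with parameter `m ≥ 2`: a perfect
`[(q^m-1)/(q-1), (q^m-1)/(q-1) - m, 3]_q` code with covering radius 1. -/
def IsHammingCode (m : ℕ) {nm : ℕ} (H : Submodule F (Fin nm → F)) : Prop :=
  2 ≤ m ∧ nm = (Fintype.card F ^ m - 1) / (Fintype.card F - 1) ∧
  Module.finrank F H = nm - m ∧ minDist (H : Set (Fin nm → F)) = 3 ∧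
  coveringRadius (H : Set (Fin nm → F)) = 1

/-- The extended code: append an overall parity-check coordinate. -/
def extendedCode {m : ℕ} (D : Set (Fin m → F)) : Set (Fin (m + 1) → F) :=
  {z | (fun i : Fin m => z i.castSucc) ∈ D ∧ ∑ i, z i = 0}

/-- Construction I(u): append `u` free coordinates to every codeword. -/
def appendCode (u : ℕ) {n : ℕ} (C : Set (Fin n → F)) : Set (Fin (n + u) → F) :=
  {z | ∃ c ∈ C, ∃ y : Fin u → F, z = Fin.append c y}

/-- Construction II(ℓ): codewords are `ℓ`-tuples of blocks whose `λ`-weighted sum lies in `C`. -/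
def repeatCode {n ℓ : ℕ} (lam : Fin ℓ → Fˣ) (C : Set (Fin n → F)) :
    Set (Fin ℓ × Fin n → F) :=
  {z | (fun j : Fin n => ∑ i : Fin ℓ, (lam i : F) * z (i, j)) ∈ C}

/-- The code `{(x₁|⋯|x_ℓ|y) : x₁+⋯+x_ℓ ∈ H, y free}` built from a code `H`. -/
def hammingRepeatCode {nm : ℕ} (ℓ u : ℕ) (H : Set (Fin nm → F)) :
    Set ((Fin ℓ × Fin nm) ⊕ Fin u → F) :=
  {z | (fun j : Fin nm => ∑ i : Fin ℓ, z (Sum.inl (i, j))) ∈ H}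

/-!
Both `C` and its dual `span {𝟙, h}`, `h = (0, 1, ξᵢ, ξⱼ)`, are two-dimensional codes in which any
two coordinates form an information set: the `2 × 2` minors of the matrix with rows `𝟙` and `h` are
the differences of the distinct elements `0, 1, ξᵢ, ξⱼ`. Everything else holds for every such code
of length 4 over a field with `q ≥ 4` elements. Two codewords agreeing in two places coincide, so
the minimum distance is 3 and every vector lies within distance 2 of the code. If no codeword
agrees with `x` off the coordinate `j`, then changing `xⱼ` brings `x` within distance 1 of the code
for exactly three values, the `j`-th coordinates of the codewords agreeing with `x` off `{j, m}`
for the three `m ≠ j`. For `x` at distance 2 this gives `c₂ = 4 · 3`. For `x` at distance 1 from a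
codeword differing from it in the coordinate `p`, one of the three values for `j ≠ p` is `xⱼ`
itself, so `b₁ = 3 (q - 3)`. In characteristic 2 the rows `𝟙, h` are orthogonal to each other and
to themselves, as `h · h = (𝟙 · h)²`, so `C⊥ = C` by dimension.
-/

open Finset Function

section Hamming

variable {ι α : Type*} [Fintype ι] [DecidableEq α]

theorem hammingDist_le_card_of_eq_off {x y : ι → α} (s : Finset ι) (h : ∀ k ∉ s, x k = y k) :
    hammingDist x y ≤ #s :=
  card_le_card fun k hk => by_contra fun hks => (mem_filter.mp hk).2 (h k hks)

theorem hammingDist_le_one_iff [Nonempty ι] {x y : ι → α} :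
    hammingDist x y ≤ 1 ↔ ∃ m, ∀ k, k ≠ m → x k = y k := by
  constructor
  · intro h
    obtain ⟨m, hm⟩ := card_le_one_iff_subset_singleton.mp h
    exact ⟨m, fun k hk => by_contra fun hne => hk (mem_singleton.mp (hm (by simpa using hne)))⟩
  · rintro ⟨m, hm⟩
    simpa using hammingDist_le_card_of_eq_off {m} (by simpa using hm)

variable [DecidableEq ι]

theorem hammingDist_update_le_one [Nonempty ι] (x : ι → α) (j : ι) (v : α) :
    hammingDist x (update x j v) ≤ 1 :=
  hammingDist_le_one_iff.mpr ⟨j, fun _ hk => (update_of_ne hk v x).symm⟩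

theorem hammingDist_eq_one_iff [Nonempty ι] {x y : ι → α} :
    hammingDist x y = 1 ↔ ∃ j v, v ≠ x j ∧ update x j v = y := by
  constructor
  · intro h
    obtain ⟨m, hm⟩ := hammingDist_le_one_iff.mp h.le
    have hy : update x m (y m) = y := update_eq_iff.mpr ⟨rfl, hm⟩
    refine ⟨m, y m, fun hxy => ?_, hy⟩
    rw [hxy, update_eq_self] at hy
    exact hammingDist_ne_zero.mp (by omega) hy
  · rintro ⟨j, v, hv, rfl⟩
    refine le_antisymm (hammingDist_update_le_one x j v) ?_
    exact hammingDist_pos.mpr fun h => hv ((update_self j v x).symm.trans (congrFun h j).symm)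

theorem card_neighbours_eq_sum [Nonempty ι] [Fintype α] (x : ι → α) (P : (ι → α) → Prop)
    [DecidablePred P] :
    Nat.card {y | hammingDist x y = 1 ∧ P y} =
      ∑ j, #{v | v ≠ x j ∧ P (update x j v)} := by
  have hset : {y | hammingDist x y = 1 ∧ P y} =
      ↑(univ.biUnion fun j =>
        ({v | v ≠ x j ∧ P (update x j v)} : Finset α).image (update x j)) := by
    ext y
    simp only [Set.mem_ofPred_eq, hammingDist_eq_one_iff, coe_biUnion, coe_image, coe_filter,
      mem_univ, true_and, Set.mem_iUnion, Set.mem_image, coe_univ, Set.mem_univ, Set.iUnion_true]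
    constructor
    · rintro ⟨⟨j, v, hv, rfl⟩, hP⟩
      exact ⟨j, v, ⟨hv, hP⟩, rfl⟩
    · rintro ⟨j, v, ⟨hv, hP⟩, rfl⟩
      exact ⟨⟨j, v, hv, rfl⟩, hP⟩
  rw [hset, Nat.card_coe_set_eq, Set.ncard_coe_finset, card_biUnion]
  · exact sum_congr rfl fun j _ => card_image_of_injective _ (update_injective x j)
  · intro j _ j' _ hjj'
    simp only [onFun, disjoint_left, mem_image, mem_filter, mem_univ, true_and, not_exists,
      not_and]
    rintro _ ⟨v, ⟨hv, -⟩, rfl⟩ v' - h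
    exact hv (by simpa [hjj'] using (congrFun h j).symm)

end Hamming

section DistToCode

variable {ι α : Type*} [Fintype ι] [DecidableEq α] {D : Set (ι → α)} {x c : ι → α}

theorem distToCode_le_hammingDist (hc : c ∈ D) : distToCode D x ≤ hammingDist x c :=
  Nat.sInf_le ⟨c, hc, rfl⟩

theorem exists_mem_hammingDist_eq_distToCode (hD : D.Nonempty) (x : ι → α) :
    ∃ c ∈ D, hammingDist x c = distToCode D x :=
  Nat.sInf_mem (s := {d | ∃ c ∈ D, hammingDist x c = d}) ⟨_, hD.some, hD.some_mem, rfl⟩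

theorem distToCode_le_iff (hD : D.Nonempty) {n : ℕ} :
    distToCode D x ≤ n ↔ ∃ c ∈ D, hammingDist x c ≤ n := by
  constructor
  · obtain ⟨c, hc, hxc⟩ := exists_mem_hammingDist_eq_distToCode hD x
    exact fun h => ⟨c, hc, hxc ▸ h⟩
  · rintro ⟨c, hc, h⟩
    exact (distToCode_le_hammingDist hc).trans h

theorem distToCode_eq_zero_iff (hD : D.Nonempty) : distToCode D x = 0 ↔ x ∈ D := by
  rw [← Nat.le_zero, distToCode_le_iff hD]
  simp

theorem distToCode_le_distToCode_add_hammingDist (hD : D.Nonempty) (x y : ι → α) :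
    distToCode D x ≤ distToCode D y + hammingDist x y := by
  obtain ⟨c, hc, hyc⟩ := exists_mem_hammingDist_eq_distToCode hD y
  calc distToCode D x ≤ hammingDist x c := distToCode_le_hammingDist hc
    _ ≤ hammingDist x y + hammingDist y c := hammingDist_triangle x y c
    _ = distToCode D y + hammingDist x y := by rw [hyc, add_comm]

theorem HasIntersectionNumbers.eq_of_distToCode_eq {b c b' c' : ℕ → ℕ}
    (h : HasIntersectionNumbers D b c) (h' : HasIntersectionNumbers D b' c') {l : ℕ}
    (hx : distToCode D x = l) : b l = b' l ∧ c l = c' l :=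
  ⟨(h l x hx).1.symm.trans (h' l x hx).1, (h l x hx).2.symm.trans (h' l x hx).2⟩

end DistToCode

theorem Fin.four_exists_pair_eq_compl :
    ∀ a b : Fin 4, a ≠ b → ∃ i j, i ≠ j ∧ ∀ k, (k ≠ a ∧ k ≠ b ↔ k = i ∨ k = j) := by
  decide

theorem Fin.four_exists_ne_of_three : ∀ a b c : Fin 4, ∃ k, k ≠ a ∧ k ≠ b ∧ k ≠ c := by
  decide

/-- Every two coordinates form an information set. For length 4 these are the MDS codes of size
`q²`, i.e. the `[4, 2, 3]_q` codes when they are linear. -/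
def IsPairInterpolating {ι α : Type*} (D : Set (ι → α)) : Prop :=
  ∀ i j : ι, i ≠ j → ∀ u v : α, ∃! c ∈ D, c i = u ∧ c j = v

namespace IsPairInterpolating

section General

variable {ι α : Type*} {D : Set (ι → α)} {c c' : ι → α} {i j : ι}

theorem exists_mem (hD : IsPairInterpolating D) (hij : i ≠ j) (u v : α) :
    ∃ c ∈ D, c i = u ∧ c j = v :=
  (hD i j hij u v).exists

theorem eq_of_eq_of_eq (hD : IsPairInterpolating D) (hij : i ≠ j) (hc : c ∈ D) (hc' : c' ∈ D)
    (hi : c i = c' i) (hj : c j = c' j) : c = c' :=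
  (hD i j hij (c' i) (c' j)).unique ⟨hc, hi, hj⟩ ⟨hc', rfl, rfl⟩

end General

section Combinatorics

variable {α : Type*} {D : Set (Fin 4 → α)} {x c c' : Fin 4 → α} {a b : Fin 4}

theorem eq_of_eq_off_pair (hD : IsPairInterpolating D) (hab : a ≠ b) (hc : c ∈ D) (hc' : c' ∈ D)
    (h : ∀ k, k ≠ a → k ≠ b → c k = c' k) : c = c' := by
  obtain ⟨i, j, hij, hcompl⟩ := Fin.four_exists_pair_eq_compl a b hab
  exact hD.eq_of_eq_of_eq hij hc hc' (h i ((hcompl i).2 (.inl rfl)).1 ((hcompl i).2 (.inl rfl)).2)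
    (h j ((hcompl j).2 (.inr rfl)).1 ((hcompl j).2 (.inr rfl)).2)

theorem exists_mem_eq_off_pair (hD : IsPairInterpolating D) (hab : a ≠ b) (x : Fin 4 → α) :
    ∃ c ∈ D, ∀ k, k ≠ a → k ≠ b → c k = x k := by
  obtain ⟨i, j, hij, hcompl⟩ := Fin.four_exists_pair_eq_compl a b hab
  obtain ⟨c, hc, hci, hcj⟩ := hD.exists_mem hij (x i) (x j)
  refine ⟨c, hc, fun k hka hkb => ?_⟩
  obtain rfl | rfl := (hcompl k).1 ⟨hka, hkb⟩
  exacts [hci, hcj]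

theorem nonempty [Nonempty α] (hD : IsPairInterpolating D) : D.Nonempty :=
  let u := Classical.arbitrary α
  let ⟨c, hc, _⟩ := hD.exists_mem (i := 0) (j := 1) (by decide) u u
  ⟨c, hc⟩

variable [DecidableEq α]

theorem three_le_hammingDist (hD : IsPairInterpolating D) (hc : c ∈ D) (hc' : c' ∈ D)
    (hne : c ≠ c') : 3 ≤ hammingDist c c' := by
  by_contra! h
  have hsplit := card_filter_add_card_filter_not (s := univ) (p := fun k => c k = c' k)
  have hagree : 1 < #{k | c k = c' k} := by
    change _ + hammingDist c c' = _ at hsplit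
    simp only [card_univ, Fintype.card_fin] at hsplit
    omega
  obtain ⟨i, hi, j, hj, hij⟩ := one_lt_card.mp hagree
  exact hne (hD.eq_of_eq_of_eq hij hc hc' (mem_filter.mp hi).2 (mem_filter.mp hj).2)

theorem eq_of_hammingDist_le_one (hD : IsPairInterpolating D) (hc : c ∈ D) (hc' : c' ∈ D)
    (h : hammingDist x c ≤ 1) (h' : hammingDist x c' ≤ 1) : c = c' := by
  by_contra hne
  have := hD.three_le_hammingDist hc hc' hne
  have := hammingDist_triangle_left c c' x
  omega

theorem distToCode_le_two (hD : IsPairInterpolating D) (x : Fin 4 → α) : distToCode D x ≤ 2 := by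
  obtain ⟨c, hc, hcx⟩ := hD.exists_mem_eq_off_pair (a := 2) (b := 3) (by decide) x
  calc distToCode D x ≤ hammingDist x c := distToCode_le_hammingDist hc
    _ ≤ #{2, 3} := hammingDist_le_card_of_eq_off _ fun k hk => by
        simp only [mem_insert, mem_singleton, not_or] at hk
        exact (hcx k hk.1 hk.2).symm
    _ = 2 := rfl

theorem minDist_eq_three [Nontrivial α] (hD : IsPairInterpolating D) : minDist D = 3 := by
  obtain ⟨u, v, huv⟩ := exists_pair_ne α
  obtain ⟨c, hc, hc0, hc1⟩ := hD.exists_mem (i := 0) (j := 1) (by decide) u u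
  obtain ⟨c', hc', hc0', hc1'⟩ := hD.exists_mem (i := 0) (j := 1) (by decide) u v
  have hne : c ≠ c' := fun h => huv (hc1.symm.trans (h ▸ hc1'))
  have h3 : hammingDist c c' = 3 := by
    refine le_antisymm ?_ (hD.three_le_hammingDist hc hc' hne)
    calc hammingDist c c' ≤ #(univ.erase (0 : Fin 4)) :=
          hammingDist_le_card_of_eq_off _ fun k hk => by
            rw [mem_erase, not_and, not_imp_not] at hk
            rw [hk (mem_univ k), hc0, hc0']
      _ = 3 := rfl
  refine le_antisymm (Nat.sInf_le ⟨c, hc, c', hc', hne, h3⟩)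
    (le_csInf ⟨3, c, hc, c', hc', hne, h3⟩ ?_)
  rintro _ ⟨x, hx, y, hy, hxy, rfl⟩
  exact hD.three_le_hammingDist hx hy hxy

end Combinatorics

section Regularity

variable {α : Type*} [DecidableEq α] [Nonempty α] {D : Set (Fin 4 → α)} {x : Fin 4 → α}

theorem card_closer_of_distToCode_eq_one (hD : IsPairInterpolating D)
    (hx : distToCode D x = 1) :
    Nat.card {y | hammingDist x y = 1 ∧ distToCode D y + 1 = 1} = 1 := by
  obtain ⟨c, hc, hxc⟩ := exists_mem_hammingDist_eq_distToCode hD.nonempty x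
  have hset : {y | hammingDist x y = 1 ∧ distToCode D y + 1 = 1} = {c} := by
    ext y
    simp only [Set.mem_ofPred_eq, Set.mem_singleton_iff, Nat.add_eq_right,
      distToCode_eq_zero_iff hD.nonempty]
    constructor
    · rintro ⟨hxy, hy⟩
      exact hD.eq_of_hammingDist_le_one hy hc hxy.le (hxc.trans hx).le
    · rintro rfl
      exact ⟨hxc.trans hx, hc⟩
  rw [hset, Nat.card_unique]

variable [Fintype α]

theorem card_farther_of_mem (hD : IsPairInterpolating D) (hx : x ∈ D) :
    Nat.card {y | hammingDist x y = 1 ∧ distToCode D y = 0 + 1} =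
      4 * (Fintype.card α - 1) := by
  have hfibre (j : Fin 4) :
      #{v | v ≠ x j ∧ distToCode D (update x j v) = 0 + 1} = Fintype.card α - 1 := by
    rw [← card_univ, ← card_erase_of_mem (mem_univ (x j)), ← filter_ne']
    refine congrArg card (filter_congr fun v _ => and_iff_left_of_imp fun hv => ?_)
    have hxy : hammingDist x (update x j v) = 1 := hammingDist_eq_one_iff.mpr ⟨j, v, hv, rfl⟩
    have hle := distToCode_le_hammingDist hx (x := update x j v)
    have hnot : update x j v ∉ D := fun hy => by
      have := hD.three_le_hammingDist hx hy (hammingDist_ne_zero.mp (by omega))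
      omega
    have := (distToCode_eq_zero_iff hD.nonempty).not.mpr hnot
    rw [hammingDist_comm] at hle
    omega
  rw [card_neighbours_eq_sum, sum_congr rfl fun j _ => hfibre j]
  simp

theorem card_filter_distToCode_update_le_one (hD : IsPairInterpolating D) {j : Fin 4}
    (hx : ¬ ∃ c ∈ D, ∀ k, k ≠ j → c k = x k) :
    #{v | distToCode D (update x j v) ≤ 1} = 3 := by
  choose! w hwD hwx using fun m (hm : m ≠ j) => hD.exists_mem_eq_off_pair hm x
  have hset : ({v | distToCode D (update x j v) ≤ 1} : Finset α) =
      (univ.erase j).image fun m => w m j := by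
    ext v
    simp only [mem_filter, mem_univ, true_and, mem_image, mem_erase, and_true,
      distToCode_le_iff hD.nonempty, hammingDist_le_one_iff]
    constructor
    · rintro ⟨c, hc, m, hcm⟩
      have hmj : m ≠ j := by
        rintro rfl
        exact hx ⟨c, hc, fun k hk => by rw [← hcm k hk, update_of_ne hk]⟩
      have hwc : w m = c := hD.eq_of_eq_off_pair hmj (hwD m hmj) hc fun k hkm hkj => by
        rw [hwx m hmj k hkm hkj, ← hcm k hkm, update_of_ne hkj]
      exact ⟨m, hmj, by rw [hwc, ← hcm j (Ne.symm hmj), update_self]⟩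
    · rintro ⟨m, hmj, rfl⟩
      refine ⟨w m, hwD m hmj, m, fun k hkm => ?_⟩
      by_cases hkj : k = j
      · subst hkj
        rw [update_self]
      · rw [update_of_ne hkj, hwx m hmj k hkm hkj]
  rw [hset, card_image_of_injOn, card_erase_of_mem (mem_univ j)]
  · rfl
  intro m hm m' hm' hmm'
  simp only [coe_erase, coe_univ, Set.mem_sdiff, Set.mem_univ, Set.mem_singleton_iff,
    true_and] at hm hm'
  by_contra hne
  obtain ⟨k, hkj, hkm, hkm'⟩ := Fin.four_exists_ne_of_three j m m'
  have hww : w m = w m' := hD.eq_of_eq_of_eq (Ne.symm hkj) (hwD m hm) (hwD m' hm') hmm' (by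
    rw [hwx m hm k hkm hkj, hwx m' hm' k hkm' hkj])
  refine hx ⟨w m, hwD m hm, fun k hk => ?_⟩
  by_cases hkm : k = m
  · subst hkm
    rw [hww, hwx m' hm' k hne hk]
  · exact hwx m hm k hkm hk

theorem card_farther_of_distToCode_eq_one (hD : IsPairInterpolating D)
    (hx : distToCode D x = 1) :
    Nat.card {y | hammingDist x y = 1 ∧ distToCode D y = 1 + 1} =
      3 * (Fintype.card α - 3) := by
  obtain ⟨c, hc, hxc⟩ := exists_mem_hammingDist_eq_distToCode hD.nonempty x
  obtain ⟨p, hp⟩ := hammingDist_le_one_iff.mp (hxc.trans hx).le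
  have hcp : x p ≠ c p := fun h => by
    have : x = c := funext fun k => if hk : k = p then hk ▸ h else hp k hk
    subst this
    rw [hammingDist_self, hx] at hxc
    omega
  have hfibre_p : #{v | v ≠ x p ∧ distToCode D (update x p v) = 1 + 1} = 0 := by
    refine card_eq_zero.mpr (filter_eq_empty_iff.mpr fun v _ ⟨_, h⟩ => ?_)
    have : distToCode D (update x p v) ≤ 1 := (distToCode_le_iff hD.nonempty).mpr
      ⟨c, hc, hammingDist_le_one_iff.mpr ⟨p, fun k hk => by rw [update_of_ne hk, hp k hk]⟩⟩
    omega
  have hfibre (j : Fin 4) (hj : j ∈ univ.erase p) :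
      #{v | v ≠ x j ∧ distToCode D (update x j v) = 1 + 1} = Fintype.card α - 3 := by
    have hjp : j ≠ p := ne_of_mem_erase hj
    have hno : ¬ ∃ c' ∈ D, ∀ k, k ≠ j → c' k = x k := by
      rintro ⟨c', hc', hc'x⟩
      have : c' = c := hD.eq_of_eq_off_pair hjp hc' hc fun k hkj hkp => by
        rw [hc'x k hkj, hp k hkp]
      exact hcp (by rw [← hc'x p (Ne.symm hjp), this])
    have hsplit := card_filter_add_card_filter_not (s := univ)
      (p := fun v => distToCode D (update x j v) ≤ 1)
    rw [hD.card_filter_distToCode_update_le_one hno, card_univ] at hsplit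
    have hfar : #{v | v ≠ x j ∧ distToCode D (update x j v) = 1 + 1} =
        #{v | ¬ distToCode D (update x j v) ≤ 1} := by
      refine congrArg card <| filter_congr fun v _ =>
        ⟨fun h => by omega, fun h => ⟨fun hv => ?_, ?_⟩⟩
      · rw [hv, update_eq_self, hx] at h
        exact h le_rfl
      · have := hD.distToCode_le_two (update x j v)
        omega
    omega
  rw [card_neighbours_eq_sum, ← add_sum_erase _ _ (mem_univ p), hfibre_p, sum_congr rfl hfibre,
    sum_const, card_erase_of_mem (mem_univ p)]
  simp

theorem card_closer_of_distToCode_eq_two (hD : IsPairInterpolating D)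
    (hx : distToCode D x = 2) :
    Nat.card {y | hammingDist x y = 1 ∧ distToCode D y + 1 = 2} = 12 := by
  have hfibre (j : Fin 4) : #{v | v ≠ x j ∧ distToCode D (update x j v) + 1 = 2} = 3 := by
    have hno : ¬ ∃ c ∈ D, ∀ k, k ≠ j → c k = x k := fun ⟨c, hc, hcx⟩ => by
      have := distToCode_le_hammingDist hc (x := x)
      have : hammingDist x c ≤ 1 := hammingDist_le_one_iff.mpr ⟨j, fun k hk => (hcx k hk).symm⟩
      omega
    rw [← hD.card_filter_distToCode_update_le_one hno]
    refine congrArg card (filter_congr fun v _ => ?_)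
    have := distToCode_le_distToCode_add_hammingDist hD.nonempty x (update x j v)
    have := hammingDist_update_le_one x j v
    refine ⟨fun h => by omega, fun h => ⟨fun hv => ?_, by omega⟩⟩
    rw [hv, update_eq_self, hx] at h
    omega
  rw [card_neighbours_eq_sum, sum_congr rfl fun j _ => hfibre j]
  rfl

theorem hasIntersectionNumbers (hD : IsPairInterpolating D) :
    HasIntersectionNumbers D
      (fun | 0 => 4 * (Fintype.card α - 1) | 1 => 3 * (Fintype.card α - 3) | _ => 0)
      (fun | 1 => 1 | 2 => 12 | _ => 0) := by
  intro l x hx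
  have hl : l ≤ 2 := hx ▸ hD.distToCode_le_two x
  interval_cases l
  · exact ⟨hD.card_farther_of_mem ((distToCode_eq_zero_iff hD.nonempty).mp hx), by simp⟩
  · exact ⟨hD.card_farther_of_distToCode_eq_one hx, hD.card_closer_of_distToCode_eq_one hx⟩
  · refine ⟨?_, hD.card_closer_of_distToCode_eq_two hx⟩
    have (y : Fin 4 → α) : distToCode D y ≠ 2 + 1 := by
      have := hD.distToCode_le_two y
      omega
    simp [this]

theorem exists_distToCode_eq (hD : IsPairInterpolating D) (hq : 4 ≤ Fintype.card α) {l : ℕ}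
    (hl : l ≤ 2) : ∃ x, distToCode D x = l := by
  obtain ⟨x₀, hx₀⟩ := hD.nonempty
  have h₁ : 0 < Nat.card {y | hammingDist x₀ y = 1 ∧ distToCode D y = 0 + 1} := by
    rw [hD.card_farther_of_mem hx₀]
    omega
  obtain ⟨⟨x₁, -, hx₁⟩⟩ := (Nat.card_pos_iff.mp h₁).1
  have h₂ : 0 < Nat.card {y | hammingDist x₁ y = 1 ∧ distToCode D y = 1 + 1} := by
    rw [hD.card_farther_of_distToCode_eq_one hx₁]
    omega
  obtain ⟨⟨x₂, -, hx₂⟩⟩ := (Nat.card_pos_iff.mp h₂).1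
  interval_cases l
  exacts [⟨x₀, (distToCode_eq_zero_iff hD.nonempty).mpr hx₀⟩, ⟨x₁, hx₁⟩, ⟨x₂, hx₂⟩]

theorem coveringRadius_eq_two (hD : IsPairInterpolating D) (hq : 4 ≤ Fintype.card α) :
    coveringRadius D = 2 :=
  IsGreatest.csSup_eq ⟨hD.exists_distToCode_eq hq le_rfl, by
    rintro _ ⟨x, rfl⟩
    exact hD.distToCode_le_two x⟩

theorem intersectionArray_eq (hD : IsPairInterpolating D) (hq : 4 ≤ Fintype.card α)
    {b c : ℕ → ℕ} (h : HasIntersectionNumbers D b c) :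
    b 0 = 4 * (Fintype.card α - 1) ∧ b 1 = 3 * (Fintype.card α - 3) ∧ c 1 = 1 ∧ c 2 = 12 := by
  have hbc {l : ℕ} (hl : l ≤ 2) :=
    let ⟨_, hx⟩ := hD.exists_distToCode_eq hq hl
    h.eq_of_distToCode_eq hD.hasIntersectionNumbers hx
  exact ⟨(hbc (l := 0) (by norm_num)).1, (hbc (l := 1) (by norm_num)).1,
    (hbc (l := 1) (by norm_num)).2, (hbc (l := 2) le_rfl).2⟩

end Regularity

variable {D : Set (Fin 4 → F)}

theorem isAntipodal (hD : IsPairInterpolating D) (hq : 4 ≤ Fintype.card F) : IsAntipodal D := by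
  choose c hcD hc0 hc1 using fun v : F => hD.exists_mem (i := 0) (j := 1) (by decide) 1 v
  have hinj (k : Fin 4) (hk : k ≠ 0) : Injective fun v => c v k := fun v v' h => by
    rw [← hc1 v, ← hc1 v',
      hD.eq_of_eq_of_eq (Ne.symm hk) (hcD v) (hcD v') (by rw [hc0, hc0]) h]
  let bad : Finset F := (univ.erase 0).biUnion fun k => {v | c v k = 0}
  have hbad : #bad < #(univ : Finset F) := by
    calc #bad ≤ ∑ k ∈ univ.erase 0, #{v | c v k = 0} := card_biUnion_le
      _ ≤ ∑ k ∈ univ.erase (0 : Fin 4), 1 := sum_le_sum fun k hk =>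
          card_le_one.mpr fun v hv v' hv' => hinj k (ne_of_mem_erase hk)
            ((mem_filter.mp hv).2.trans (mem_filter.mp hv').2.symm)
      _ < #univ := by
        rw [card_univ]
        simp only [sum_const, card_erase_of_mem (mem_univ _), card_univ, Fintype.card_fin,
          smul_eq_mul]
        omega
  obtain ⟨v, -, hv⟩ := exists_mem_notMem_of_card_lt_card hbad
  have hall (k : Fin 4) : c v k ≠ 0 := by
    by_cases hk : k = 0
    · subst hk
      rw [hc0]
      exact one_ne_zero
    · exact fun h => hv (mem_biUnion.mpr ⟨k, mem_erase.mpr ⟨hk, mem_univ k⟩, by simpa using h⟩)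
  exact ⟨c v, hcD v, by simp [hammingNorm, hall]⟩

theorem antipodal_completelyRegular (hD : IsPairInterpolating D) (hq : 4 ≤ Fintype.card F) :
    minDist D = 3 ∧ IsAntipodal D ∧ IsCompletelyRegular D ∧ coveringRadius D = 2 ∧
      ∀ b c : ℕ → ℕ, HasIntersectionNumbers D b c →
        b 0 = 4 * (Fintype.card F - 1) ∧ b 1 = 3 * (Fintype.card F - 3) ∧ c 1 = 1 ∧ c 2 = 12 :=
  ⟨hD.minDist_eq_three, hD.isAntipodal hq, ⟨_, _, hD.hasIntersectionNumbers⟩,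
    hD.coveringRadius_eq_two hq, fun _ _ h => hD.intersectionArray_eq hq h⟩

end IsPairInterpolating

section DotProduct

open Module LinearMap.BilinForm

variable {K ι : Type*} [Field K]

theorem eq_zero_and_eq_zero_of_det_ne_zero {p q r u s t : K} (hdet : p * u - q * r ≠ 0)
    (h₁ : s * p + t * q = 0) (h₂ : s * r + t * u = 0) : s = 0 ∧ t = 0 := by
  refine ⟨(mul_eq_zero.mp ?_).resolve_right hdet, (mul_eq_zero.mp ?_).resolve_right hdet⟩
  · linear_combination u * h₁ - q * h₂
  · linear_combination p * h₂ - r * h₁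

variable {a b : ι → K}

theorem finrank_span_pair_of_det_ne_zero {i j : ι} (hdet : a i * b j - a j * b i ≠ 0) :
    finrank K (Submodule.span K {a, b}) = 2 := by
  have hli : LinearIndependent K ![a, b] := LinearIndependent.pair_iff.mpr fun s t h =>
    eq_zero_and_eq_zero_of_det_ne_zero (p := a i) (q := b i) (r := a j) (u := b j)
      (by rwa [mul_comm (b i)]) (by simpa using congrFun h i)
      (by simpa using congrFun h j)
  rw [← Matrix.range_cons_cons_empty a b ![], finrank_span_eq_card hli, Fintype.card_fin]

theorem eq_zero_of_mem_span_pair {i j : ι} (hdet : a i * b j - a j * b i ≠ 0) {v : ι → K}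
    (hv : v ∈ Submodule.span K {a, b}) (hi : v i = 0) (hj : v j = 0) : v = 0 := by
  obtain ⟨s, t, rfl⟩ := Submodule.mem_span_pair.mp hv
  obtain ⟨rfl, rfl⟩ := eq_zero_and_eq_zero_of_det_ne_zero (p := a i) (q := b i) (r := a j)
    (u := b j) (by rwa [mul_comm (b i)]) (by simpa using hi) (by simpa using hj)
  simp

variable [Fintype ι]

theorem dotProductBilin_nondegenerate :
    Nondegenerate (dotProductBilin K K : LinearMap.BilinForm K (ι → K)) :=
  ⟨fun x hx => dotProduct_eq_zero x hx,
    fun y hy => dotProduct_eq_zero y fun w => (dotProduct_comm y w).trans (hy w)⟩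

theorem dotProductBilin_isRefl : IsRefl (dotProductBilin K K : LinearMap.BilinForm K (ι → K)) :=
  fun x y h => (dotProduct_comm y x).trans h

theorem dualSet_eq_orthogonal (W : Submodule K (ι → K)) :
    dualSet (W : Set (ι → K)) = orthogonal (dotProductBilin K K) W :=
  rfl

theorem mem_orthogonal_span_pair_iff {x : ι → K} :
    x ∈ orthogonal (dotProductBilin K K) (Submodule.span K {a, b}) ↔
      a ⬝ᵥ x = 0 ∧ b ⬝ᵥ x = 0 := by
  refine ⟨fun h => ⟨h a (Submodule.subset_span (by simp)),
    h b (Submodule.subset_span (by simp))⟩, fun ⟨ha, hb⟩ n hn => ?_⟩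
  obtain ⟨s, t, rfl⟩ := Submodule.mem_span_pair.mp hn
  simp [ha, hb]

theorem eq_zero_of_mem_orthogonal_span_pair {k l : ι} (hkl : k ≠ l)
    (hdet : a k * b l - a l * b k ≠ 0) {x : ι → K}
    (hx : x ∈ orthogonal (dotProductBilin K K) (Submodule.span K {a, b}))
    (hsupp : ∀ m, m ≠ k → m ≠ l → x m = 0) : x = 0 := by
  obtain ⟨ha, hb⟩ := mem_orthogonal_span_pair_iff.mp hx
  have hdot (c : ι → K) : c ⬝ᵥ x = x k * c k + x l * c l := by
    rw [dotProduct, Fintype.sum_eq_add k l hkl fun m hm => by rw [hsupp m hm.1 hm.2, mul_zero]]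
    ring
  obtain ⟨hk, hl⟩ := eq_zero_and_eq_zero_of_det_ne_zero hdet ((hdot a).symm.trans ha)
    ((hdot b).symm.trans hb)
  funext m
  by_cases hmk : m = k
  · rw [hmk, hk, Pi.zero_apply]
  by_cases hml : m = l
  · rw [hml, hl, Pi.zero_apply]
  exact hsupp m hmk hml

theorem isPairInterpolating_of_finrank_eq_two (W : Submodule K (ι → K)) (hW : finrank K W = 2)
    (h0 : ∀ w ∈ W, ∀ i j, i ≠ j → w i = 0 → w j = 0 → w = 0) :
    IsPairInterpolating (W : Set (ι → K)) := by
  intro i j hij u v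
  let π : W →ₗ[K] K × K := ((LinearMap.proj i).prod (LinearMap.proj j)).comp W.subtype
  have hinj : Function.Injective π := (injective_iff_map_eq_zero π).mpr fun w hw =>
    Subtype.ext (h0 w w.2 i j hij (congrArg Prod.fst hw) (congrArg Prod.snd hw))
  obtain ⟨w, hw⟩ := (LinearMap.injective_iff_surjective_of_finrank_eq_finrank
    (by simp [hW])).mp hinj (u, v)
  refine ⟨w, ⟨w.2, congrArg Prod.fst hw, congrArg Prod.snd hw⟩, ?_⟩
  rintro c ⟨hc, hci, hcj⟩
  exact congrArg Subtype.val (hinj (a₁ := ⟨c, hc⟩) (hw ▸ Prod.ext hci hcj))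

theorem isPairInterpolating_span_pair (hdet : ∀ i j, i ≠ j → a i * b j - a j * b i ≠ 0) :
    IsPairInterpolating (Submodule.span K {a, b} : Set (ι → K)) := fun i j hij =>
  isPairInterpolating_of_finrank_eq_two _ (finrank_span_pair_of_det_ne_zero (hdet i j hij))
    (fun _ hw i' j' hij' => eq_zero_of_mem_span_pair (hdet i' j' hij') hw) i j hij

end DotProduct

section OrthogonalLengthFour

open Module LinearMap.BilinForm

variable {K : Type*} [Field K] {a b : Fin 4 → K}

theorem finrank_orthogonal_span_pair (hdet : a 0 * b 1 - a 1 * b 0 ≠ 0) :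
    finrank K (orthogonal (dotProductBilin K K) (Submodule.span K {a, b})) = 2 := by
  rw [finrank_orthogonal dotProductBilin_nondegenerate, finrank_span_pair_of_det_ne_zero hdet]
  simp

theorem isPairInterpolating_orthogonal_span_pair
    (hdet : ∀ i j, i ≠ j → a i * b j - a j * b i ≠ 0) :
    IsPairInterpolating
      (orthogonal (dotProductBilin K K) (Submodule.span K {a, b}) : Set (Fin 4 → K)) := by
  refine isPairInterpolating_of_finrank_eq_two _
    (finrank_orthogonal_span_pair (hdet 0 1 (by decide))) fun w hw i j hij hi hj => ?_
  obtain ⟨k, l, hkl, hcompl⟩ := Fin.four_exists_pair_eq_compl i j hij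
  refine eq_zero_of_mem_orthogonal_span_pair hkl (hdet k l hkl) hw fun m hmk hml => ?_
  obtain rfl | rfl : m = i ∨ m = j := by
    by_contra! h
    obtain rfl | rfl := (hcompl m).1 h <;> contradiction
  exacts [hi, hj]

theorem orthogonal_span_pair_eq_self (hdet : a 0 * b 1 - a 1 * b 0 ≠ 0) (haa : a ⬝ᵥ a = 0)
    (hab : a ⬝ᵥ b = 0) (hbb : b ⬝ᵥ b = 0) :
    orthogonal (dotProductBilin K K) (Submodule.span K {a, b}) = Submodule.span K {a, b} := by
  refine (Submodule.eq_of_le_of_finrank_eq ?_ ?_).symm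
  · rw [Submodule.span_le, Set.insert_subset_iff, Set.singleton_subset_iff]
    simp only [SetLike.mem_coe, mem_orthogonal_span_pair_iff, dotProduct_comm b a]
    exact ⟨⟨haa, hab⟩, hab, hbb⟩
  · rw [finrank_orthogonal_span_pair hdet, finrank_span_pair_of_det_ne_zero hdet]

end OrthogonalLengthFour

theorem two_eq_zero_of_card_eq_two_pow {K : Type*} [Field K] [Fintype K] {r : ℕ} (hr0 : r ≠ 0)
    (hr : Fintype.card K = 2 ^ r) : (2 : K) = 0 := by
  have := FiniteField.cast_card_eq_zero K
  rw [hr, Nat.cast_pow, Nat.cast_ofNat] at this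
  exact (pow_eq_zero_iff hr0).mp this

/-- for `q ≥ 4` and distinct `ξᵢ, ξⱼ ∈ 𝔽_q \ {0,1}` with `ξᵢ + ξⱼ + 1 = 0`, the
code `{x ∈ 𝔽_q⁴ : x₁+x₂+x₃+x₄ = 0, x₂+ξᵢx₃+ξⱼx₄ = 0}` is a linear antipodal `[4,2,3]_q`
completely regular code with covering radius 2 and intersection array `(4(q-1), 3(q-3); 1, 12)`;
the same holds for its dual, which is spanned by `(1,1,1,1)` and `(0,1,ξᵢ,ξⱼ)`; and if
`q = 2^r`, then `C` is self-dual. -/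
theorem antipodal_4_2_3_code
    {F : Type*} [Field F] [Fintype F] [DecidableEq F]
    (hq : 4 ≤ Fintype.card F) (ξi ξj : F) (hij : ξi ≠ ξj)
    (hi0 : ξi ≠ 0) (hi1 : ξi ≠ 1) (hj0 : ξj ≠ 0) (hj1 : ξj ≠ 1)
    (hsum : ξi + ξj + 1 = 0)
    (C : Submodule F (Fin 4 → F))
    (hC : ∀ x : Fin 4 → F, x ∈ C ↔
      (x 0 + x 1 + x 2 + x 3 = 0 ∧ x 1 + ξi * x 2 + ξj * x 3 = 0)) :
    (Module.finrank F C = 2 ∧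
      minDist (C : Set (Fin 4 → F)) = 3 ∧
      IsAntipodal (C : Set (Fin 4 → F)) ∧
      IsCompletelyRegular (C : Set (Fin 4 → F)) ∧
      coveringRadius (C : Set (Fin 4 → F)) = 2 ∧
      ∀ b c : ℕ → ℕ, HasIntersectionNumbers (C : Set (Fin 4 → F)) b c →
        b 0 = 4 * (Fintype.card F - 1) ∧ b 1 = 3 * (Fintype.card F - 3) ∧
        c 1 = 1 ∧ c 2 = 12) ∧
    (dualSet (C : Set (Fin 4 → F)) =
      (Submodule.span F {(![1, 1, 1, 1] : Fin 4 → F), ![0, 1, ξi, ξj]} :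
        Submodule F (Fin 4 → F))) ∧
    (Module.finrank F
        (Submodule.span F {(![1, 1, 1, 1] : Fin 4 → F), ![0, 1, ξi, ξj]}) = 2 ∧
      minDist (dualSet (C : Set (Fin 4 → F))) = 3 ∧
      IsAntipodal (dualSet (C : Set (Fin 4 → F))) ∧
      IsCompletelyRegular (dualSet (C : Set (Fin 4 → F))) ∧
      coveringRadius (dualSet (C : Set (Fin 4 → F))) = 2 ∧
      ∀ b c : ℕ → ℕ, HasIntersectionNumbers (dualSet (C : Set (Fin 4 → F))) b c →
        b 0 = 4 * (Fintype.card F - 1) ∧ b 1 = 3 * (Fintype.card F - 3) ∧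
        c 1 = 1 ∧ c 2 = 12) ∧
    ((∃ r : ℕ, Fintype.card F = 2 ^ r) →
      (C : Set (Fin 4 → F)) = dualSet (C : Set (Fin 4 → F))) := by
  set a : Fin 4 → F := ![1, 1, 1, 1]
  set b : Fin 4 → F := ![0, 1, ξi, ξj]
  have hdet : ∀ i j : Fin 4, i ≠ j → a i * b j - a j * b i ≠ 0 := by
    intro i j hne
    fin_cases i <;> fin_cases j <;>
      simp [a, b, sub_eq_zero, hi0, hi1, hj0, hj1, hij, hi1.symm, hj1.symm, hij.symm] at hne ⊢
  have hCG :
      C = LinearMap.BilinForm.orthogonal (dotProductBilin F F) (Submodule.span F {a, b}) := by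
    ext x
    rw [hC, mem_orthogonal_span_pair_iff]
    simp [a, b, dotProduct, Fin.sum_univ_four]
  have hdual : dualSet (C : Set (Fin 4 → F)) = Submodule.span F {a, b} := by
    rw [dualSet_eq_orthogonal, hCG, LinearMap.BilinForm.orthogonal_orthogonal
      dotProductBilin_nondegenerate dotProductBilin_isRefl]
  refine ⟨⟨hCG ▸ finrank_orthogonal_span_pair (hdet 0 1 (by decide)),
      (hCG ▸ isPairInterpolating_orthogonal_span_pair hdet).antipodal_completelyRegular hq⟩,
    hdual, ⟨finrank_span_pair_of_det_ne_zero (hdet 0 1 (by decide)),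
      hdual ▸ (isPairInterpolating_span_pair hdet).antipodal_completelyRegular hq⟩, ?_⟩
  rintro ⟨r, hr⟩
  have htwo : (2 : F) = 0 := two_eq_zero_of_card_eq_two_pow (by rintro rfl; omega) hr
  rw [hdual, hCG, orthogonal_span_pair_eq_self (hdet 0 1 (by decide))]
  all_goals simp [a, b, dotProduct, Fin.sum_univ_four]
  · linear_combination 2 * htwo
  · linear_combination hsum
  · linear_combination (1 + ξi + ξj) * hsum - (ξi + ξj + ξi * ξj) * htwo
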